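/- arXiv:1607.02790 — 2 statements merged into one kernel-verified Lean document; each statement's English description precedes it below -/
import Mathlib

section
/- Hyper normalisation is natural in the set parameter for Kleisli maps: for every g : A → D(B), writing n·g : Fin n × A → D(Fin n × B) for the map (i,a) ↦ Σ_b g(a)(b)·η(i,b), one has N((n·g)_*(ω)) = D(id × g_*)(N(ω)) for every ω ∈ D(Fin n × A), where id × g_* : Fin n × D(A) → Fin n × D(B) sends (i,φ) to (i, g_*(φ)). -/
/-! The Kleisli map `(n·g)_*` acts on each fibre `{i} × A` separately, so it preserves the
marginal `ω[i]`, and dividing by that marginal commutes with the linear map `g_*`; hence the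
normalised components of `(n·g)_*(ω)` are the `g_*(ω_i)`. -/

open scoped ENNReal

noncomputable section

namespace HyperNorm

variable {A B : Type*} {n m : ℕ}

/-- `ω[i] = Σ_a ω(i,a)`. -/
def fmass (ω : PMF (Fin n × A)) (i : Fin n) : ℝ≥0∞ := ∑' a, ω (i, a)

lemma tsum_fmass (ω : PMF (Fin n × A)) : ∑' i, fmass ω i = 1 := by
  simp only [fmass]
  rw [← ENNReal.tsum_prod']
  exact ω.tsum_coe

lemma fmass_ne_top (ω : PMF (Fin n × A)) (i : Fin n) : fmass ω i ≠ ⊤ := by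
  apply ne_top_of_le_ne_top ENNReal.one_ne_top
  rw [← tsum_fmass ω]
  exact ENNReal.le_tsum i

/-- The first marginal `i ↦ ω[i]` as a distribution. -/
def fstM (ω : PMF (Fin n × A)) : PMF (Fin n) :=
  ⟨fun i => fmass ω i, ENNReal.summable.hasSum_iff.mpr (tsum_fmass ω)⟩

/-- The normalised `i`-th component `ω_i(a) = ω(i,a)/ω[i]` (junk value if `ω[i] = 0`,
which never contributes to `hnorm` below since it is weighted by `ω[i] = 0`). -/
def ncond (ω : PMF (Fin n × A)) (i : Fin n) : PMF A :=
  if h : fmass ω i ≠ 0 then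
    ⟨fun a => ω (i, a) / fmass ω i,
      ENNReal.summable.hasSum_iff.mpr (by
        simp only [div_eq_mul_inv]
        rw [ENNReal.tsum_mul_right, ← div_eq_mul_inv]
        exact ENNReal.div_self h (fmass_ne_top ω i))⟩
  else PMF.pure (ω.support_nonempty.some.2)

/-- Hyper normalisation `N(ω) = Σ_{i with ω[i] ≠ 0} ω[i]·η(i, ω_i)`. -/
def hnorm (ω : PMF (Fin n × A)) : PMF (Fin n × PMF A) :=
  (fstM ω).bind fun i => PMF.pure (i, ncond ω i)

/-- Graph map `gr(f)(x)(y,x') = f(x)(y) if x' = x, else 0`. -/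
def gr {X Y : Type*} (f : X → PMF Y) : X → PMF (Y × X) :=
  fun x => (f x).map fun y => (y, x)

lemma bind_congr_of_mem_support {X Y : Type*} (p : PMF X) {f f' : X → PMF Y}
    (h : ∀ x ∈ p.support, f x = f' x) : p.bind f = p.bind f' := by
  ext y
  simp only [PMF.bind_apply]
  refine tsum_congr fun x => ?_
  by_cases hx : p x = 0
  · rw [hx, zero_mul, zero_mul]
  · rw [h x hx]

lemma map_prodMk_apply {ι : Type*} [DecidableEq ι] (q : PMF B) (j i : ι) (b : B) :
    q.map (Prod.mk j) (i, b) = if j = i then q b else 0 := by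
  classical
  rw [PMF.map_apply]
  split_ifs with hji
  · simp [hji, eq_comm (a := b)]
  · simp [Ne.symm hji]

/-- The Kleisli map `n·g : (i, a) ↦ Σ_b g(a)(b)·η(i, b)`. -/
def copowerKleisli {ι : Type*} (g : A → PMF B) (p : ι × A) : PMF (ι × B) :=
  (g p.2).map (Prod.mk p.1)

lemma bind_copowerKleisli_apply {ι : Type*} (g : A → PMF B) (ω : PMF (ι × A)) (i : ι) (b : B) :
    ω.bind (copowerKleisli g) (i, b) = ∑' a, ω (i, a) * g a b := by
  classical
  simp only [PMF.bind_apply, ENNReal.tsum_prod', copowerKleisli, map_prodMk_apply, mul_ite,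
    mul_zero]
  rw [ENNReal.tsum_comm]
  simp

lemma fmass_bind_copowerKleisli (g : A → PMF B) (ω : PMF (Fin n × A)) (i : Fin n) :
    fmass (ω.bind (copowerKleisli g)) i = fmass ω i := by
  simp only [fmass, bind_copowerKleisli_apply]
  rw [ENNReal.tsum_comm]
  exact tsum_congr fun a => by rw [ENNReal.tsum_mul_left, (g a).tsum_coe, mul_one]

lemma fstM_bind_copowerKleisli (g : A → PMF B) (ω : PMF (Fin n × A)) :
    fstM (ω.bind (copowerKleisli g)) = fstM ω :=
  PMF.ext (fmass_bind_copowerKleisli g ω)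

lemma ncond_apply_of_fmass_ne_zero (ω : PMF (Fin n × A)) {i : Fin n} (h : fmass ω i ≠ 0)
    (a : A) : ncond ω i a = ω (i, a) / fmass ω i :=
  congrArg (· a) (dif_pos h : ncond ω i = _)

lemma ncond_bind_copowerKleisli (g : A → PMF B) (ω : PMF (Fin n × A)) {i : Fin n}
    (h : fmass ω i ≠ 0) : ncond (ω.bind (copowerKleisli g)) i = (ncond ω i).bind g := by
  have h' : fmass (ω.bind (copowerKleisli g)) i ≠ 0 := by rwa [fmass_bind_copowerKleisli]
  ext b
  rw [ncond_apply_of_fmass_ne_zero _ h', fmass_bind_copowerKleisli, bind_copowerKleisli_apply,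
    PMF.bind_apply]
  simp only [ncond_apply_of_fmass_ne_zero _ h, div_eq_mul_inv, ← ENNReal.tsum_mul_right]
  exact tsum_congr fun a => by ring

/-- naturality of `N` for Kleisli maps:
`N((n·g)_*(ω)) = D(id × g_*)(N(ω))` where `(n·g)(i,a) = Σ_b g(a)(b)·η(i,b)`. -/
theorem hnorm_kleisli_natural (g : A → PMF B) (ω : PMF (Fin n × A)) :
    hnorm (ω.bind fun p => (g p.2).map fun b => (p.1, b)) =
      (hnorm ω).map fun p => (p.1, p.2.bind g) := by
  change hnorm (ω.bind (copowerKleisli g)) = _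
  simp only [hnorm, PMF.map_bind, PMF.pure_map, fstM_bind_copowerKleisli]
  exact bind_congr_of_mem_support _ fun i hi => by rw [ncond_bind_copowerKleisli g ω hi]

end HyperNorm
end
end

section
/- Naturality of hyper normalisation in the index parameter: let h : Fin n → D(Fin m), and for any type X write h·X : Fin n × X → D(Fin m × X) for the map (i,x) ↦ Σ_j h(i)(j)·η(j,x). Then for every ω ∈ D(Fin n × A): D(id × μ)( N( (h·D(A))_*( N(ω) ) ) ) = N( (h·A)_*(ω) ), where the inner N is the hyper normalisation D(Fin n × A) → D(Fin n × D(A)), the outer N is the hyper normalisation D(Fin m × D(A)) → D(Fin m × D(D(A))), and id × μ : Fin m × D(D(A)) → Fin m × D(A). -/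
/-!
Let `flatten : D(I × D(A)) → D(I × A)` multiply out `(i, φ) ↦ D(a ↦ (i, a))(φ)`. It is a left
inverse of `N`, and `N(τ)` is the only distribution of the form `Σ_i ρ(i)·η(i, c_i)` that
flattens to `τ`. The left-hand side has this form, and the monad laws of `D` (including its
commutativity, which lets `flatten` pass through reindexing by `h`) compute its flattening:
`flatten(D(id × μ)(N(ω'))) = flatten(flatten(N(ω'))) = flatten(ω') = (h·A)_*(flatten(N(ω))) = (h·A)_*(ω)`
for `ω' = (h·D(A))_*(N(ω))`.
-/

open scoped ENNReal

noncomputable section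

namespace HyperNorm

variable {A B : Type*} {n m : ℕ}

theorem _root_.PMF.bind_congr_of_ne_zero {α β : Type*} (p : PMF α) {f g : α → PMF β}
    (hfg : ∀ a, p a ≠ 0 → f a = g a) : p.bind f = p.bind g := by
  refine PMF.ext fun b => tsum_congr fun a => ?_
  by_cases ha : p a = 0
  · simp [ha]
  · rw [hfg a ha]

variable {I J : Type*}

def flatten (σ : PMF (I × PMF A)) : PMF (I × A) :=
  σ.bind fun p => p.2.map fun a => (p.1, a)

def reindex {X : Type*} (h : I → PMF J) (σ : PMF (I × X)) : PMF (J × X) :=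
  σ.bind fun p => (h p.1).map fun j => (j, p.2)

lemma flatten_reindex (h : I → PMF J) (σ : PMF (I × PMF A)) :
    flatten (reindex h σ) = reindex h (flatten σ) := by
  simp only [flatten, reindex, PMF.bind_bind, ← PMF.bind_pure_comp, Function.comp_def,
    PMF.pure_bind]
  exact congrArg σ.bind (funext fun p => PMF.bind_comm _ _ _)

lemma flatten_map_join (Φ : PMF (I × PMF (PMF A))) :
    flatten (Φ.map fun q => (q.1, q.2.bind id)) = flatten (flatten Φ) := by
  simp only [flatten, PMF.bind_bind, ← PMF.bind_pure_comp, Function.comp_def, PMF.pure_bind, id]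

lemma flatten_bind_pure_apply (ρ : PMF I) (c : I → PMF A) (i : I) (a : A) :
    flatten (ρ.bind fun i => PMF.pure (i, c i)) (i, a) = ρ i * c i a := by
  simp only [flatten, PMF.bind_bind, PMF.pure_bind, PMF.bind_apply, PMF.map_apply]
  rw [tsum_eq_single i fun i' hi' => by simp [Ne.symm hi'],
    tsum_eq_single a fun a' ha' => by simp [Ne.symm ha']]
  simp

lemma ncond_apply (ω : PMF (Fin n × A)) {i : Fin n} (hi : fmass ω i ≠ 0) (a : A) :
    ncond ω i a = ω (i, a) / fmass ω i := by
  simp only [ncond, ne_eq, hi, not_false_eq_true, ↓reduceDIte]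
  rfl

lemma fmass_mul_ncond (ω : PMF (Fin n × A)) (i : Fin n) (a : A) :
    fmass ω i * ncond ω i a = ω (i, a) := by
  by_cases hi : fmass ω i = 0
  · have hle : ω (i, a) ≤ fmass ω i := ENNReal.le_tsum a
    rw [hi, zero_mul, eq_comm, ← nonpos_iff_eq_zero, ← hi]
    exact hle
  · rw [ncond_apply ω hi, ENNReal.mul_div_cancel hi (fmass_ne_top ω i)]

lemma flatten_hnorm (ω : PMF (Fin n × A)) : flatten (hnorm ω) = ω :=
  PMF.ext fun ⟨i, a⟩ => by
    rw [hnorm, flatten_bind_pure_apply]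
    exact fmass_mul_ncond ω i a

lemma eq_hnorm_of_flatten_eq {ω : PMF (Fin n × A)} {ρ : PMF (Fin n)} {c : Fin n → PMF A}
    (hω : flatten (ρ.bind fun i => PMF.pure (i, c i)) = ω) :
    ρ.bind (fun i => PMF.pure (i, c i)) = hnorm ω := by
  have hρc (i : Fin n) (a : A) : ρ i * c i a = ω (i, a) := by
    rw [← hω, flatten_bind_pure_apply]
  have hfmass (i : Fin n) : fmass ω i = ρ i := by
    simp only [fmass, ← hρc, ENNReal.tsum_mul_left, PMF.tsum_coe, mul_one]
  have hfstM : fstM ω = ρ := PMF.ext hfmass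
  rw [hnorm, hfstM]
  refine ρ.bind_congr_of_ne_zero fun i hi => ?_
  have hncond : ncond ω i = c i := PMF.ext fun a => by
    rw [ncond_apply ω (hfmass i ▸ hi), ← hρc, hfmass, mul_comm,
      ENNReal.mul_div_cancel_right hi (PMF.apply_ne_top ρ i)]
  rw [hncond]

lemma map_hnorm (ω : PMF (Fin n × A)) (f : PMF A → B) :
    (hnorm ω).map (fun q => (q.1, f q.2)) =
      (fstM ω).bind fun i => PMF.pure (i, f (ncond ω i)) := by
  simp only [hnorm, PMF.map_bind, PMF.pure_map]

/-- naturality of `N` in the index parameter: for `h : Fin n → D(Fin m)`,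
`D(id × μ)(N((h·D(A))_*(N(ω)))) = N((h·A)_*(ω))`. -/
theorem hnorm_index_natural (h : Fin n → PMF (Fin m)) (ω : PMF (Fin n × A)) :
    (hnorm ((hnorm ω).bind fun p : Fin n × PMF A => (h p.1).map fun j => (j, p.2))).map
        (fun q : Fin m × PMF (PMF A) => (q.1, q.2.bind id)) =
      hnorm (ω.bind fun p : Fin n × A => (h p.1).map fun j => (j, p.2)) := by
  change (hnorm (reindex h (hnorm ω))).map _ = hnorm (reindex h ω)
  rw [map_hnorm _ fun φ => φ.bind id]
  apply eq_hnorm_of_flatten_eq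
  rw [← map_hnorm _ fun φ => φ.bind id, flatten_map_join, flatten_hnorm, flatten_reindex,
    flatten_hnorm]

end HyperNorm
end
end
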